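/- arXiv:1902.06609 — 2 statements merged into one kernel-verified Lean document; each statement's English description precedes it below -/
import Mathlib

section
/- Let h : ℝ → ℝ be nondecreasing and set g(t) := h(t) + t. For ε > 0 let γ^ε(t) := (1/ε)∫_{t-ε}^{t} g(s) ds, and let ζ^ε(u) := inf{s > 0 : γ^ε(s) > u} and ζ⁰(u) := inf{s > 0 : g(s) > u} be the generalized inverses. Then for every ε > 0 and every u ≥ 0, ζ^ε(u) − ε ≤ ζ⁰(u) ≤ ζ^ε(u); consequently ζ^ε converges to ζ⁰ uniformly on [0,∞) as ε → 0⁺. -/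
open Filter MeasureTheory

/-- The mollification `F^ε(t) = (1/ε)∫_{t-ε}^{t} F(s) ds`. -/
noncomputable def moll (F : ℝ → ℝ) (ε t : ℝ) : ℝ := (1 / ε) * ∫ s in (t - ε)..t, F s

/-- The generalized right-continuous inverse `f⁻(u) = inf{s > 0 : f s > u}`. -/
noncomputable def geninv (f : ℝ → ℝ) (u : ℝ) : ℝ := sInf {s : ℝ | 0 < s ∧ u < f s}

lemma moll_bounds {g : ℝ → ℝ} (hgm : Monotone g) {ε : ℝ} (hε : 0 < ε) (t : ℝ) :
    g (t - ε) ≤ moll g ε t ∧ moll g ε t ≤ g t := by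
  have hab : t - ε ≤ t := by linarith
  have hint : IntervalIntegrable g volume (t - ε) t :=
    (hgm.monotoneOn _).intervalIntegrable
  have h1 : ∫ _s in (t-ε)..t, g (t-ε) ≤ ∫ s in (t-ε)..t, g s :=
    intervalIntegral.integral_mono_on hab (intervalIntegrable_const) hint
      (fun s hs => hgm hs.1)
  have h2 : (∫ s in (t-ε)..t, g s) ≤ ∫ _s in (t-ε)..t, g t :=
    intervalIntegral.integral_mono_on hab hint intervalIntegrable_const
      (fun s hs => hgm hs.2)
  rw [intervalIntegral.integral_const] at h1 h2
  simp only [smul_eq_mul] at h1 h2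
  have e1 : moll g ε t = (1/ε) * ∫ s in (t-ε)..t, g s := rfl
  constructor
  · rw [e1, div_mul_eq_mul_div, le_div_iff₀ hε]; nlinarith
  · rw [e1, div_mul_eq_mul_div, div_le_iff₀ hε]; nlinarith

/-- For `h` nondecreasing and `g t = h t + t`, with `γ^ε` the mollification of `g`,
the generalized inverses satisfy `ζ^ε(u) − ε ≤ ζ⁰(u) ≤ ζ^ε(u)` for `u ≥ 0`, and
consequently `ζ^ε → ζ⁰` uniformly on `[0,∞)` as `ε → 0⁺`. -/
theorem geninv_of_mollification_sandwich_and_uniform_convergence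
    (h : ℝ → ℝ) (hh : Monotone h) (g : ℝ → ℝ) (hg : ∀ t, g t = h t + t) :
    (∀ ε : ℝ, 0 < ε → ∀ u : ℝ, 0 ≤ u →
        geninv (moll g ε) u - ε ≤ geninv g u ∧ geninv g u ≤ geninv (moll g ε) u) ∧
    TendstoUniformlyOn (fun ε u => geninv (moll g ε) u) (geninv g)
      (nhdsWithin (0 : ℝ) (Set.Ioi 0)) (Set.Ici 0) := by
  have hgm : Monotone g := fun a b hab => by
    rw [hg a, hg b]; exact add_le_add (hh hab) hab
  have hAne : ∀ u : ℝ, {s : ℝ | 0 < s ∧ u < g s}.Nonempty := by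
    intro u
    refine ⟨max 1 (u - h 1 + 1), lt_of_lt_of_le one_pos (le_max_left _ _), ?_⟩
    have h1 : h 1 ≤ h (max 1 (u - h 1 + 1)) := hh (le_max_left _ _)
    have h2 : u - h 1 + 1 ≤ max 1 (u - h 1 + 1) := le_max_right _ _
    rw [hg]; linarith
  have hbdd : ∀ f : ℝ → ℝ, ∀ u : ℝ, BddBelow {s : ℝ | 0 < s ∧ u < f s} :=
    fun f u => ⟨0, fun s hs => hs.1.le⟩
  have key : ∀ ε : ℝ, 0 < ε → ∀ u : ℝ,
      geninv (moll g ε) u - ε ≤ geninv g u ∧ geninv g u ≤ geninv (moll g ε) u := by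
    intro ε hε u
    have hmemB : ∀ s, 0 < s → u < g s → (0 < s + ε ∧ u < moll g ε (s + ε)) := by
      intro s hs hus
      have := (moll_bounds hgm hε (s + ε)).1
      rw [add_sub_cancel_right] at this
      exact ⟨by linarith, lt_of_lt_of_le hus this⟩
    have hBne : {s : ℝ | 0 < s ∧ u < moll g ε s}.Nonempty := by
      obtain ⟨s, hs1, hs2⟩ := hAne u
      exact ⟨s + ε, hmemB s hs1 hs2⟩
    constructor
    · have hle : ∀ s ∈ {s : ℝ | 0 < s ∧ u < g s}, geninv (moll g ε) u ≤ s + ε :=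
        fun s hs => csInf_le (hbdd _ u) (hmemB s hs.1 hs.2)
      exact le_csInf (hAne u) fun s hs => by linarith [hle s hs]
    · exact csInf_le_csInf (hbdd _ u) hBne fun s hs =>
        ⟨hs.1, lt_of_lt_of_le hs.2 (moll_bounds hgm hε s).2⟩
  refine ⟨fun ε hε u _ => key ε hε u, ?_⟩
  rw [Metric.tendstoUniformlyOn_iff]
  intro δ hδ
  filter_upwards [Ioo_mem_nhdsGT_of_mem (Set.left_mem_Ico.2 hδ)] with ε hε u _
  obtain ⟨h1, h2⟩ := key ε hε.1 u
  rw [Real.dist_eq, abs_lt]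
  constructor <;> [linarith [hε.2]; linarith [hε.2]]
end

section
/- With the notation of the random time change construction, the original path is recovered from Z by evaluating at the time change: Z(γ⁰(t)) = L(t) for every t ≥ 0. (This is the identity Z_{γ⁰(t)} ≡ L(t) used in Step 3 of the proof of Theorem 2.1.) -/
open Filter MeasureTheory

/-- The sum of squared jumps `q(t) = Σ_{0 < s ≤ t} (ΔL s)²`, where `ΔL s = L s − L(s−)`
and `Lm` denotes the left-limit function `L(·−)`. (For `t ≤ 0` the index set is empty, so
`q(t) = 0`.) -/
noncomputable def jumpSq (L Lm : ℝ → ℝ) (t : ℝ) : ℝ :=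
  ∑' s : Set.Ioc (0 : ℝ) t, (L s - Lm s) ^ 2

/-- The strictly increasing time change `γ⁰(t) = q(t) + t`. -/
noncomputable def gamma0 (L Lm : ℝ → ℝ) (t : ℝ) : ℝ := jumpSq L Lm t + t

/-- `ζ⁰`, the generalized inverse of `γ⁰`. -/
noncomputable def zeta0 (L Lm : ℝ → ℝ) (u : ℝ) : ℝ := geninv (gamma0 L Lm) u

/-- `η₋(t) = sup{s ≥ 0 : ζ⁰(s) < ζ⁰(t)}` (with `sup ∅ = 0`, the real convention). -/
noncomputable def etaMinus (L Lm : ℝ → ℝ) (t : ℝ) : ℝ :=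
  sSup {s : ℝ | 0 ≤ s ∧ zeta0 L Lm s < zeta0 L Lm t}

/-- `η⁺(t) = inf{s ≥ 0 : ζ⁰(s) > ζ⁰(t)}`. -/
noncomputable def etaPlus (L Lm : ℝ → ℝ) (t : ℝ) : ℝ :=
  sInf {s : ℝ | 0 ≤ s ∧ zeta0 L Lm t < zeta0 L Lm s}

/-- The limiting continuous path `Z`: `Z(t) = L(ζ⁰(t))` when `η₋(t) = η⁺(t)`, and the
linear interpolation between `L(ζ⁰(t)−)` and `L(ζ⁰(t))` otherwise. -/
noncomputable def Zlim (L Lm : ℝ → ℝ) (t : ℝ) : ℝ :=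
  if etaMinus L Lm t = etaPlus L Lm t then L (zeta0 L Lm t)
  else ((t - etaMinus L Lm t) * L (zeta0 L Lm t) +
        (etaPlus L Lm t - t) * Lm (zeta0 L Lm t)) /
       (etaPlus L Lm t - etaMinus L Lm t)

/-!
`γ⁰` is strictly increasing, and it is right-continuous because the squared jumps over `(t, t + δ]`
form a tail of a summable series, which vanishes as `δ ↓ 0`. Hence `ζ⁰` is a left inverse of `γ⁰`
on `[0, ∞)` and exceeds `t` immediately to the right of `γ⁰(t)`, so `η⁺(γ⁰(t)) = γ⁰(t)`: the point
`γ⁰(t)` is the right end of its interpolation interval, where `Z` takes the value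
`L(ζ⁰(γ⁰(t))) = L(t)`.
-/

open Topology

section Geninv

variable {f : ℝ → ℝ}

lemma geninv_setOf_nonempty (htop : Tendsto f atTop atTop) (u : ℝ) :
    {s : ℝ | 0 < s ∧ u < f s}.Nonempty :=
  ((eventually_gt_atTop 0).and (htop.eventually_gt_atTop u)).exists

lemma geninv_monotone (htop : Tendsto f atTop atTop) : Monotone (geninv f) := fun _ v huv =>
  csInf_le_csInf ⟨0, fun _ hs => hs.1.le⟩ (geninv_setOf_nonempty htop v)
    fun _ hs => ⟨hs.1, huv.trans_lt hs.2⟩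

lemma geninv_apply_self (hf : StrictMono f) {t : ℝ} (ht : 0 ≤ t) : geninv f (f t) = t := by
  have hset : {s : ℝ | 0 < s ∧ f t < f s} = Set.Ioi t := by
    ext s
    exact ⟨fun hs => hf.lt_iff_lt.mp hs.2, fun hs => ⟨ht.trans_lt hs, hf hs⟩⟩
  rw [geninv, hset, csInf_Ioi]

lemma lt_geninv_of_lt (hf : Monotone f) (htop : Tendsto f atTop atTop) {t u : ℝ}
    (hc : ContinuousWithinAt f (Set.Ici t) t) (hu : f t < u) : t < geninv f u := by
  obtain ⟨r, hfr, htr⟩ : ∃ r, f r < u ∧ t < r :=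
    ((hc.mono Set.Ioi_subset_Ici_self).eventually (gt_mem_nhds hu)
      |>.and self_mem_nhdsWithin).exists
  refine htr.trans_le (le_csInf (geninv_setOf_nonempty htop u) fun s hs => ?_)
  by_contra! hsr
  exact (hf hsr.le).not_gt (hfr.trans hs.2)

end Geninv

section TsumIoc

variable {f : ℝ → ℝ} {a : ℝ}

lemma monotone_tsum_Ioc (hf0 : 0 ≤ f) (hf : ∀ t, Summable fun s : Set.Ioc a t => f s) :
    Monotone fun t => ∑' s : Set.Ioc a t, f s := fun u v huv => by
  simp only [tsum_subtype]
  exact Summable.tsum_le_tsum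
    (Set.indicator_le_indicator_of_subset (Set.Ioc_subset_Ioc_right huv) hf0)
    (summable_subtype_iff_indicator.mp (hf u)) (summable_subtype_iff_indicator.mp (hf v))

lemma tendsto_indicator_Ioc_nhdsGE (t x : ℝ) :
    Tendsto (fun u => (Set.Ioc a u).indicator f x) (𝓝[≥] t)
      (𝓝 ((Set.Ioc a t).indicator f x)) := by
  refine tendsto_const_nhds.congr' ?_
  rcases le_or_gt x t with hxt | htx
  · filter_upwards [self_mem_nhdsWithin] with u (htu : t ≤ u)
    simp [Set.indicator_apply, hxt, hxt.trans htu]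
  · filter_upwards [nhdsWithin_le_nhds (gt_mem_nhds htx)] with u hux
    simp [htx.not_ge, hux.not_ge]

/-- Tannery's theorem, with the restriction to `(a, t + 1]` as dominating series. -/
lemma tendsto_tsum_Ioc_nhdsGE (hf : ∀ t, Summable fun s : Set.Ioc a t => f s) (t : ℝ) :
    Tendsto (fun u => ∑' s : Set.Ioc a u, f s) (𝓝[≥] t) (𝓝 (∑' s : Set.Ioc a t, f s)) := by
  have hbound : Summable ((Set.Ioc a (t + 1)).indicator fun x => ‖f x‖) :=
    summable_subtype_iff_indicator.mp (hf (t + 1)).norm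
  simp only [tsum_subtype]
  refine tendsto_tsum_of_dominated_convergence hbound (tendsto_indicator_Ioc_nhdsGE t) ?_
  filter_upwards [nhdsWithin_le_nhds (gt_mem_nhds (lt_add_one t))] with u hu x
  rw [norm_indicator_eq_indicator_norm]
  exact Set.indicator_le_indicator_of_subset (Set.Ioc_subset_Ioc_right hu.le)
    (fun _ => norm_nonneg _) x

end TsumIoc

section TimeChange

variable {L Lm : ℝ → ℝ}

lemma self_le_gamma0 (t : ℝ) : t ≤ gamma0 L Lm t :=
  le_add_of_nonneg_left (tsum_nonneg fun _ => sq_nonneg _)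

lemma tendsto_gamma0_atTop : Tendsto (gamma0 L Lm) atTop atTop :=
  tendsto_atTop_mono self_le_gamma0 tendsto_id

lemma jumpSq_monotone (hsum : ∀ t : ℝ, Summable fun s : Set.Ioc (0 : ℝ) t => (L s - Lm s) ^ 2) :
    Monotone (jumpSq L Lm) :=
  monotone_tsum_Ioc (f := fun s => (L s - Lm s) ^ 2) (fun _ => sq_nonneg _) hsum

lemma gamma0_strictMono (hsum : ∀ t : ℝ, Summable fun s : Set.Ioc (0 : ℝ) t => (L s - Lm s) ^ 2) :
    StrictMono (gamma0 L Lm) :=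
  fun _ _ h => add_lt_add_of_le_of_lt (jumpSq_monotone hsum h.le) h

lemma gamma0_continuousWithinAt_Ici
    (hsum : ∀ t : ℝ, Summable fun s : Set.Ioc (0 : ℝ) t => (L s - Lm s) ^ 2) (t : ℝ) :
    ContinuousWithinAt (gamma0 L Lm) (Set.Ici t) t :=
  (tendsto_tsum_Ioc_nhdsGE (f := fun s => (L s - Lm s) ^ 2) hsum t).add
    (continuousWithinAt_id (x := t))

lemma zeta0_gamma0 (hsum : ∀ t : ℝ, Summable fun s : Set.Ioc (0 : ℝ) t => (L s - Lm s) ^ 2)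
    {t : ℝ} (ht : 0 ≤ t) : zeta0 L Lm (gamma0 L Lm t) = t :=
  geninv_apply_self (gamma0_strictMono hsum) ht

lemma etaPlus_gamma0 (hsum : ∀ t : ℝ, Summable fun s : Set.Ioc (0 : ℝ) t => (L s - Lm s) ^ 2)
    {t : ℝ} (ht : 0 ≤ t) : etaPlus L Lm (gamma0 L Lm t) = gamma0 L Lm t := by
  have hset : {s : ℝ | 0 ≤ s ∧ zeta0 L Lm (gamma0 L Lm t) < zeta0 L Lm s} =
      Set.Ioi (gamma0 L Lm t) := by
    ext s
    rw [Set.mem_ofPred_eq, Set.mem_Ioi, zeta0_gamma0 hsum ht]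
    constructor
    · rintro ⟨-, hts⟩
      by_contra! hs
      exact hts.not_ge <|
        (geninv_monotone tendsto_gamma0_atTop hs).trans_eq (zeta0_gamma0 hsum ht)
    · intro hs
      exact ⟨(ht.trans (self_le_gamma0 t)).trans hs.le,
        lt_geninv_of_lt (gamma0_strictMono hsum).monotone tendsto_gamma0_atTop
          (gamma0_continuousWithinAt_Ici hsum t) hs⟩
  rw [etaPlus, hset, csInf_Ioi]

end TimeChange

theorem Zlim_comp_gamma0_general
    (L Lm : ℝ → ℝ)
    (hsum : ∀ t : ℝ, Summable (fun s : Set.Ioc (0 : ℝ) t => (L s - Lm s) ^ 2)) :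
    ∀ t : ℝ, 0 ≤ t → Zlim L Lm (gamma0 L Lm t) = L t := by
  intro t ht
  rw [Zlim, zeta0_gamma0 hsum ht, etaPlus_gamma0 hsum ht]
  split_ifs with h
  · rfl
  · have hne : gamma0 L Lm t - etaMinus L Lm (gamma0 L Lm t) ≠ 0 := sub_ne_zero.mpr (Ne.symm h)
    rw [sub_self, zero_mul, add_zero, mul_div_cancel_left₀ _ hne]

/-- Step 3 of the proof of Theorem 2.1: the original path is recovered from `Z` by
evaluating at the time change, `Z(γ⁰(t)) = L(t)` for every `t ≥ 0`. -/
theorem Zlim_comp_gamma0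
    (L Lm : ℝ → ℝ)
    (hrc : ∀ t : ℝ, ContinuousWithinAt L (Set.Ici t) t)
    (hleft : ∀ t : ℝ, Tendsto L (nhdsWithin t (Set.Iio t)) (nhds (Lm t)))
    (hconst : ∀ s : ℝ, s ≤ 0 → L s = L 0)
    (hsum : ∀ t : ℝ, Summable (fun s : Set.Ioc (0 : ℝ) t => (L s - Lm s) ^ 2)) :
    ∀ t : ℝ, 0 ≤ t → Zlim L Lm (gamma0 L Lm t) = L t :=
  Zlim_comp_gamma0_general L Lm hsum
end
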